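/- In sl(3), the classical r-matrix r_{JJ} = H₁₂^⊥ ∧ E₁₃ + η H₁₃^⊥ ∧ E₁₂ satisfies the classical Yang–Baxter equation for every scalar η. -/

import Mathlib

set_option maxHeartbeats 1000000

/- STATEMENT 17: In sl(3), r_JJ = H₁₂^⊥ ∧ E₁₃ + η H₁₃^⊥ ∧ E₁₂ satisfies the classical
Yang–Baxter equation for every scalar η, where H₁₂^⊥ = (1/3)(E₁₁+E₂₂−2E₃₃) and
H₁₃^⊥ = (1/3)(E₁₁−2E₂₂+E₃₃).  (0-based matrix indices.) -/

open TensorProduct Matrix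

attribute [local instance 100] LieRing.ofAssociativeRing

noncomputable section

variable (K : Type) [Field K] [CharZero K] (L : Type) [LieRing L] [LieAlgebra K L]

/-- The triple tensor power of the universal enveloping algebra. -/
abbrev UEA3 := UniversalEnvelopingAlgebra K L ⊗[K]
    (UniversalEnvelopingAlgebra K L ⊗[K] UniversalEnvelopingAlgebra K L)

variable {L}

/-- `a ↦ ι a ⊗ 1 ⊗ 1`. -/
def emb1 (a : L) : UEA3 K L :=
  (UniversalEnvelopingAlgebra.ι K a) ⊗ₜ[K] ((1 : UniversalEnvelopingAlgebra K L) ⊗ₜ[K] 1)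

/-- `a ↦ 1 ⊗ ι a ⊗ 1`. -/
def emb2 (a : L) : UEA3 K L :=
  (1 : UniversalEnvelopingAlgebra K L) ⊗ₜ[K] ((UniversalEnvelopingAlgebra.ι K a) ⊗ₜ[K] 1)

/-- `a ↦ 1 ⊗ 1 ⊗ ι a`. -/
def emb3 (a : L) : UEA3 K L :=
  (1 : UniversalEnvelopingAlgebra K L) ⊗ₜ[K]
    ((1 : UniversalEnvelopingAlgebra K L) ⊗ₜ[K] (UniversalEnvelopingAlgebra.ι K a))

/-- `(a ∧ b)₁₂ = a ⊗ b ⊗ 1 − b ⊗ a ⊗ 1`. -/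
def w12 (a b : L) : UEA3 K L := emb1 K a * emb2 K b - emb1 K b * emb2 K a

/-- `(a ∧ b)₁₃ = a ⊗ 1 ⊗ b − b ⊗ 1 ⊗ a`. -/
def w13 (a b : L) : UEA3 K L := emb1 K a * emb3 K b - emb1 K b * emb3 K a

/-- `(a ∧ b)₂₃ = 1 ⊗ a ⊗ b − 1 ⊗ b ⊗ a`. -/
def w23 (a b : L) : UEA3 K L := emb2 K a * emb3 K b - emb2 K b * emb3 K a

def Esl3 (i j : Fin 3) : Matrix (Fin 3) (Fin 3) K := Matrix.single i j 1

def H12perp : Matrix (Fin 3) (Fin 3) K :=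
  (3 : K)⁻¹ • (Esl3 K 0 0 + Esl3 K 1 1 - (2 : K) • Esl3 K 2 2)

def H13perp : Matrix (Fin 3) (Fin 3) K :=
  (3 : K)⁻¹ • (Esl3 K 0 0 - (2 : K) • Esl3 K 1 1 + Esl3 K 2 2)

/-- `(r_JJ)ₚq` as a function of the wedge embedding. -/
def rJJ (η : K)
    (w : Matrix (Fin 3) (Fin 3) K → Matrix (Fin 3) (Fin 3) K → UEA3 K (Matrix (Fin 3) (Fin 3) K)) :
    UEA3 K (Matrix (Fin 3) (Fin 3) K) :=
  w (H12perp K) (Esl3 K 0 2) + η • w (H13perp K) (Esl3 K 0 1)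

/-! The r-matrix is a sum of two "Borel" wedges `h ∧ e` with `⁅h, e⁆ = e`. Expanding the
Yang–Baxter expression of such a wedge in pure tensors `ι a ⊗ ι b ⊗ ι c`, its six terms cancel
in pairs; the cross terms between the two wedges involve only brackets of the first pair with
the second, which all vanish. In `sl(3)`, `H₁₂^⊥` and `H₁₃^⊥` are diagonal, so they act on
`E₁₃` and `E₁₂` by differences of diagonal entries, which gives exactly these relations. -/

section Wedge

variable (F : Type) [Field F] {𝔤 : Type} [LieRing 𝔤] [LieAlgebra F 𝔤]

def tmul3 (a b c : 𝔤) : UEA3 F 𝔤 :=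
  UniversalEnvelopingAlgebra.ι F a ⊗ₜ[F]
    (UniversalEnvelopingAlgebra.ι F b ⊗ₜ[F] UniversalEnvelopingAlgebra.ι F c)

@[simp] lemma tmul3_zero_left (b c : 𝔤) : tmul3 F 0 b c = 0 := by simp [tmul3]
@[simp] lemma tmul3_zero_mid (a c : 𝔤) : tmul3 F a 0 c = 0 := by simp [tmul3]
@[simp] lemma tmul3_zero_right (a b : 𝔤) : tmul3 F a b 0 = 0 := by simp [tmul3]
@[simp] lemma tmul3_neg_left (a b c : 𝔤) : tmul3 F (-a) b c = -tmul3 F a b c := by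
  simp [tmul3, neg_tmul]
@[simp] lemma tmul3_neg_mid (a b c : 𝔤) : tmul3 F a (-b) c = -tmul3 F a b c := by
  simp [tmul3, neg_tmul, tmul_neg]
@[simp] lemma tmul3_neg_right (a b c : 𝔤) : tmul3 F a b (-c) = -tmul3 F a b c := by
  simp [tmul3, tmul_neg]

lemma lie_w12_w13 (a b c d : 𝔤) : ⁅w12 F a b, w13 F c d⁆ =
    tmul3 F ⁅a, c⁆ b d - tmul3 F ⁅a, d⁆ b c - tmul3 F ⁅b, c⁆ a d + tmul3 F ⁅b, d⁆ a c := by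
  simp only [w12, w13, emb1, emb2, emb3, tmul3, Ring.lie_def, LieHom.map_lie,
    Algebra.TensorProduct.tmul_mul_tmul, mul_one, one_mul, sub_tmul, mul_sub, sub_mul]
  abel

lemma lie_w12_w23 (a b c d : 𝔤) : ⁅w12 F a b, w23 F c d⁆ =
    tmul3 F a ⁅b, c⁆ d - tmul3 F a ⁅b, d⁆ c - tmul3 F b ⁅a, c⁆ d + tmul3 F b ⁅a, d⁆ c := by
  simp only [w12, w23, emb1, emb2, emb3, tmul3, Ring.lie_def, LieHom.map_lie,
    Algebra.TensorProduct.tmul_mul_tmul, mul_one, one_mul, sub_tmul, tmul_sub, mul_sub, sub_mul]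
  abel

lemma lie_w13_w23 (a b c d : 𝔤) : ⁅w13 F a b, w23 F c d⁆ =
    tmul3 F a c ⁅b, d⁆ - tmul3 F a d ⁅b, c⁆ - tmul3 F b c ⁅a, d⁆ + tmul3 F b d ⁅a, c⁆ := by
  simp only [w13, w23, emb1, emb2, emb3, tmul3, Ring.lie_def, LieHom.map_lie,
    Algebra.TensorProduct.tmul_mul_tmul, mul_one, one_mul, tmul_sub, mul_sub, sub_mul]
  abel

/-- `[r₁₂, r₁₃] + [r₁₂, r₂₃] + [r₁₃, r₂₃]` for `r` given, as `rJJ` is, through its wedges. -/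
def cyb (r : (𝔤 → 𝔤 → UEA3 F 𝔤) → UEA3 F 𝔤) : UEA3 F 𝔤 :=
  ⁅r (w12 F), r (w13 F)⁆ + ⁅r (w12 F), r (w23 F)⁆ + ⁅r (w13 F), r (w23 F)⁆

theorem cyb_wedge_add_smul_wedge {h e h' e' : 𝔤} (he : ⁅h, e⁆ = e) (he' : ⁅h', e'⁆ = e')
    (hh' : ⁅h, h'⁆ = 0) (ee' : ⁅e, e'⁆ = 0) (he'_zero : ⁅h, e'⁆ = 0) (h'e_zero : ⁅h', e⁆ = 0)
    (η : F) : cyb F (fun w => w h e + η • w h' e') = 0 := by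
  have eh : ⁅e, h⁆ = -e := by rw [← lie_skew, he]
  have e'h' : ⁅e', h'⁆ = -e' := by rw [← lie_skew, he']
  have h'h : ⁅h', h⁆ = 0 := by rw [← lie_skew, hh', neg_zero]
  have e'e : ⁅e', e⁆ = 0 := by rw [← lie_skew, ee', neg_zero]
  have e'h : ⁅e', h⁆ = 0 := by rw [← lie_skew, he'_zero, neg_zero]
  have eh' : ⁅e, h'⁆ = 0 := by rw [← lie_skew, h'e_zero, neg_zero]
  -- without the explicit `L`, `simp` fails to unify `smul_lie` with the brackets in `UEA3 F 𝔤`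
  simp only [cyb, add_lie, lie_add, smul_lie (L := UEA3 F 𝔤), lie_smul, lie_w12_w13, lie_w12_w23,
    lie_w13_w23, he, he', hh', ee', he'_zero, h'e_zero, eh, e'h', h'h, e'e, e'h, eh', lie_self,
    tmul3_zero_left, tmul3_zero_mid, tmul3_zero_right, tmul3_neg_left, tmul3_neg_mid,
    tmul3_neg_right]
  module

end Wedge

lemma lie_diagonal_single {R n : Type} [CommRing R] [Fintype n] [DecidableEq n] (d : n → R)
    (i j : n) (c : R) : ⁅diagonal d, single i j c⁆ = (d i - d j) • single i j c := by
  ext k l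
  simp only [Ring.lie_def, Matrix.sub_apply, diagonal_mul, mul_diagonal, Matrix.smul_apply,
    single_apply, smul_eq_mul]
  split_ifs with h
  · obtain ⟨rfl, rfl⟩ := h
    ring
  · simp

section Sl3

variable {F : Type} [Field F]

lemma H12perp_eq_smul_diagonal : H12perp F = (3 : F)⁻¹ • diagonal ![1, 1, -2] := by
  rw [H12perp]
  congr 1
  ext i j
  fin_cases i <;> fin_cases j <;> simp [Esl3]

lemma H13perp_eq_smul_diagonal : H13perp F = (3 : F)⁻¹ • diagonal ![1, -2, 1] := by
  rw [H13perp]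
  congr 1
  ext i j
  fin_cases i <;> fin_cases j <;> simp [Esl3]

lemma lie_H12perp_Esl3_02 [NeZero (3 : F)] : ⁅H12perp F, Esl3 F 0 2⁆ = Esl3 F 0 2 := by
  rw [H12perp_eq_smul_diagonal, smul_lie, Esl3, lie_diagonal_single, smul_smul]
  simp only [Matrix.cons_val, sub_neg_eq_add]
  norm_num [inv_mul_cancel₀ (NeZero.ne (3 : F))]

lemma lie_H13perp_Esl3_01 [NeZero (3 : F)] : ⁅H13perp F, Esl3 F 0 1⁆ = Esl3 F 0 1 := by
  rw [H13perp_eq_smul_diagonal, smul_lie, Esl3, lie_diagonal_single, smul_smul]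
  simp only [Matrix.cons_val, sub_neg_eq_add]
  norm_num [inv_mul_cancel₀ (NeZero.ne (3 : F))]

lemma lie_H12perp_Esl3_01 : ⁅H12perp F, Esl3 F 0 1⁆ = 0 := by
  rw [H12perp_eq_smul_diagonal, smul_lie, Esl3, lie_diagonal_single]
  simp

lemma lie_H13perp_Esl3_02 : ⁅H13perp F, Esl3 F 0 2⁆ = 0 := by
  rw [H13perp_eq_smul_diagonal, smul_lie, Esl3, lie_diagonal_single]
  simp

lemma lie_H12perp_H13perp : ⁅H12perp F, H13perp F⁆ = 0 := by
  rw [H12perp_eq_smul_diagonal, H13perp_eq_smul_diagonal, smul_lie, lie_smul, Ring.lie_def,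
    (commute_diagonal _ _).eq, sub_self, smul_zero, smul_zero]

lemma lie_Esl3_02_Esl3_01 : ⁅Esl3 F 0 2, Esl3 F 0 1⁆ = 0 := by
  simp [Ring.lie_def, Esl3]

end Sl3

theorem stmt17 (η : K) :
    ⁅rJJ K η (w12 K), rJJ K η (w13 K)⁆ + ⁅rJJ K η (w12 K), rJJ K η (w23 K)⁆ +
      ⁅rJJ K η (w13 K), rJJ K η (w23 K)⁆ = 0 :=
  cyb_wedge_add_smul_wedge K lie_H12perp_Esl3_02 lie_H13perp_Esl3_01 lie_H12perp_H13perp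
    lie_Esl3_02_Esl3_01 lie_H12perp_Esl3_01 lie_H13perp_Esl3_02 η
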